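/- Two terms of sort Env of the forms env(b1, env(b2, ..., env(bm, r)...)) and env(b1', env(b2', ..., env(bk', r')...)), where r and r' are each either a variable or the constant emptyEnv, are LC-equal if and only if r = r', m = k, and there is a bijection π of {1,...,m} with bi =_LC b'_{π(i)} for all i; in particular, the LC-equivalence class of such a term is determined by its tail together with the multiset of LC-classes of its Bind-components. -/
import Mathlib


namespace LCTerms

/-- The four sorts: bindings, environments, expressions and bound variables. -/
inductive TSort : Type where
  | Bind | Env | Exp | BV
deriving DecidableEq

/-- Many-sorted terms over the signature `emptyEnv : Env`, `env : Bind × Env → Env`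
(the theory symbols), and the free symbols `bind : BV × Exp → Bind`, `var : BV → Exp`,
`lam : BV × Exp → Exp`, `app : Exp × Exp → Exp`, `lett : Env × Exp → Exp`,
together with sorted first-order variables. No function symbol has result sort `BV`. -/
inductive Tm : TSort → Type where
  | fvar : (σ : TSort) → ℕ → Tm σ
  | emptyEnv : Tm .Env
  | env : Tm .Bind → Tm .Env → Tm .Env
  | bind : Tm .BV → Tm .Exp → Tm .Bind
  | var : Tm .BV → Tm .Exp
  | lam : Tm .BV → Tm .Exp → Tm .Exp
  | app : Tm .Exp → Tm .Exp → Tm .Exp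
  | lett : Tm .Env → Tm .Exp → Tm .Exp

/-- The equational theory LC (left-commutativity): the congruence on terms generated by
the axiom `env(x, env(y, z)) = env(y, env(x, z))`. -/
inductive LC : {σ : TSort} → Tm σ → Tm σ → Prop
  | ax {x y : Tm .Bind} {z : Tm .Env} :
      LC (.env x (.env y z)) (.env y (.env x z))
  | refl {σ : TSort} (t : Tm σ) : LC t t
  | symm {σ : TSort} {s t : Tm σ} : LC s t → LC t s
  | trans {σ : TSort} {s t u : Tm σ} : LC s t → LC t u → LC s u
  | envC {b b' : Tm .Bind} {e e' : Tm .Env} :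
      LC b b' → LC e e' → LC (.env b e) (.env b' e')
  | bindC {x x' : Tm .BV} {s s' : Tm .Exp} :
      LC x x' → LC s s' → LC (.bind x s) (.bind x' s')
  | varC {x x' : Tm .BV} : LC x x' → LC (.var x) (.var x')
  | lamC {x x' : Tm .BV} {s s' : Tm .Exp} :
      LC x x' → LC s s' → LC (.lam x s) (.lam x' s')
  | appC {s s' t t' : Tm .Exp} :
      LC s s' → LC t t' → LC (.app s t) (.app s' t')
  | lettC {e e' : Tm .Env} {s s' : Tm .Exp} :
      LC e e' → LC s s' → LC (.lett e s) (.lett e' s')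

/-- The set of (sorted) first-order variables occurring in a term. -/
def varsOf : {σ : TSort} → Tm σ → Finset (TSort × ℕ)
  | _, .fvar σ n => {(σ, n)}
  | _, .emptyEnv => ∅
  | _, .env b e => varsOf b ∪ varsOf e
  | _, .bind x s => varsOf x ∪ varsOf s
  | _, .var x => varsOf x
  | _, .lam x s => varsOf x ∪ varsOf s
  | _, .app s t => varsOf s ∪ varsOf t
  | _, .lett e s => varsOf e ∪ varsOf s

end LCTerms

namespace LCTerms

/-- `env*(L ∪ r)`: the term `env(b₁, env(b₂, …, env(b_m, r)…))`. -/
def mkEnv (L : List (Tm .Bind)) (r : Tm .Env) : Tm .Env := L.foldr .env r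

/-- Tails of Env-spines: a variable of sort `Env` or the constant `emptyEnv`. -/
def IsTail (r : Tm .Env) : Prop := (∃ n, r = .fvar .Env n) ∨ r = .emptyEnv


instance bindSetoid : Setoid (Tm .Bind) := ⟨LC, ⟨LC.refl, LC.symm, LC.trans⟩⟩

/-- The multiset of LC-classes of Bind components of an Env term. -/
def binds : Tm .Env → Multiset (Quotient bindSetoid)
  | .fvar _ _ => 0
  | .emptyEnv => 0
  | .env b e => ⟦b⟧ ::ₘ binds e

/-- The tail of the Env-spine of an Env term. -/
def tailOf : Tm .Env → Tm .Env
  | .env _ e => tailOf e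
  | .fvar _ n => .fvar .Env n
  | .emptyEnv => .emptyEnv

/-- Invariant predicate used in the induction over LC derivations. -/
def InvP : (σ : TSort) → Tm σ → Tm σ → Prop
  | .Env, s, t => binds s = binds t ∧ tailOf s = tailOf t
  | _, _, _ => True

lemma invP_refl {σ : TSort} (t : Tm σ) : InvP σ t t := by
  cases σ <;> first | exact ⟨rfl, rfl⟩ | trivial

lemma invP_symm {σ : TSort} {s t : Tm σ} (h : InvP σ s t) : InvP σ t s := by
  cases σ <;> first | trivial | exact ⟨h.1.symm, h.2.symm⟩

lemma invP_trans {σ : TSort} {s t u : Tm σ} (h1 : InvP σ s t) (h2 : InvP σ t u) :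
    InvP σ s u := by
  cases σ <;> first | trivial | exact ⟨h1.1.trans h2.1, h1.2.trans h2.2⟩

lemma lc_inv : ∀ {σ : TSort} {s t : Tm σ}, LC s t → InvP σ s t := by
  intro σ s t h
  induction h with
  | @ax x y z =>
      constructor
      · simp [binds, Multiset.cons_swap]
      · simp [tailOf]
  | refl t => exact invP_refl t
  | symm h ih => exact invP_symm ih
  | trans h1 h2 ih1 ih2 => exact invP_trans ih1 ih2
  | @envC b b' e e' h1 h2 ih1 ih2 =>
      have hq : (⟦b⟧ : Quotient bindSetoid) = ⟦b'⟧ := Quotient.sound h1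
      constructor
      · simp [binds, (ih2 : InvP .Env e e').1, hq]
      · simp [tailOf, (ih2 : InvP .Env e e').2]
  | bindC _ _ _ _ => trivial
  | varC _ _ => trivial
  | lamC _ _ _ _ => trivial
  | appC _ _ _ _ => trivial
  | lettC _ _ _ _ => trivial

lemma binds_mkEnv (L : List (Tm .Bind)) (r : Tm .Env) :
    binds (mkEnv L r) = (L.map (fun b => (⟦b⟧ : Quotient bindSetoid)) : Multiset _) + binds r := by
  induction L with
  | nil => simp [mkEnv, binds]
  | cons b L ih =>
      simp only [mkEnv, List.foldr] at ih ⊢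
      simp only [binds, ih, List.map_cons]
      rw [← Multiset.cons_coe, Multiset.cons_add]
  
lemma tailOf_mkEnv (L : List (Tm .Bind)) (r : Tm .Env) :
    tailOf (mkEnv L r) = tailOf r := by
  induction L with
  | nil => rfl
  | cons b L ih =>
      simp only [mkEnv, List.foldr] at ih ⊢
      simp [tailOf, ih]

lemma IsTail.binds_eq {r : Tm .Env} (h : IsTail r) : binds r = 0 := by
  rcases h with ⟨n, rfl⟩ | rfl <;> simp [binds]

lemma IsTail.tailOf_eq {r : Tm .Env} (h : IsTail r) : tailOf r = r := by
  rcases h with ⟨n, rfl⟩ | rfl <;> simp [tailOf]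

lemma lc_mkEnv_forall₂ {L M : List (Tm .Bind)} (h : List.Forall₂ LC L M) (r : Tm .Env) :
    LC (mkEnv L r) (mkEnv M r) := by
  induction h with
  | nil => exact LC.refl _
  | cons hb _ ih => exact LC.envC hb ih

lemma lc_mkEnv_perm {L M : List (Tm .Bind)} (h : L.Perm M) (r : Tm .Env) :
    LC (mkEnv L r) (mkEnv M r) := by
  induction h with
  | nil => exact LC.refl _
  | cons b _ ih => exact LC.envC (LC.refl b) ih
  | swap x y l => exact LC.ax
  | trans _ _ ih1 ih2 => exact LC.trans ih1 ih2

lemma exists_perm_forall₂ :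
    ∀ {L L' : List (Tm .Bind)},
      (L.map (fun b => (⟦b⟧ : Quotient bindSetoid))).Perm
        (L'.map (fun b => (⟦b⟧ : Quotient bindSetoid))) →
      ∃ L'', L'.Perm L'' ∧ List.Forall₂ LC L L'' := by
  intro L
  induction L with
  | nil =>
      intro L' h
      have h0 : L'.map (fun b => (⟦b⟧ : Quotient bindSetoid)) = [] := h.symm.eq_nil
      have hL' : L' = [] := List.map_eq_nil_iff.mp h0
      exact ⟨[], by simp [hL'], List.Forall₂.nil⟩
  | cons b L ih =>
      intro L' h
      have hb : (⟦b⟧ : Quotient bindSetoid) ∈ L'.map (fun b => (⟦b⟧ : Quotient bindSetoid)) :=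
        h.subset (by simp)
      obtain ⟨b', hb'mem, hb'eq⟩ := List.mem_map.mp hb
      obtain ⟨A, B, rfl⟩ := List.append_of_mem hb'mem
      have hmid : ((A ++ b' :: B).map (fun b => (⟦b⟧ : Quotient bindSetoid))).Perm
          ((⟦b⟧ : Quotient bindSetoid) :: (A ++ B).map (fun b => (⟦b⟧ : Quotient bindSetoid))) := by
        simpa [hb'eq] using (List.perm_middle
          (a := (⟦b'⟧ : Quotient bindSetoid))
          (l₁ := A.map (fun b => (⟦b⟧ : Quotient bindSetoid)))
          (l₂ := B.map (fun b => (⟦b⟧ : Quotient bindSetoid))))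
      have h2 : (L.map (fun b => (⟦b⟧ : Quotient bindSetoid))).Perm
          ((A ++ B).map (fun b => (⟦b⟧ : Quotient bindSetoid))) :=
        (h.trans hmid).cons_inv
      obtain ⟨L'', hperm, hfa⟩ := ih h2
      refine ⟨b' :: L'', ?_, List.Forall₂.cons (Quotient.exact hb'eq).symm hfa⟩
      exact List.perm_middle.trans (hperm.cons b')

theorem lc_env_spine_characterization'
    (L L' : List (Tm .Bind)) (r r' : Tm .Env) (hr : IsTail r) (hr' : IsTail r') :
    LC (mkEnv L r) (mkEnv L' r') ↔
      (r = r' ∧ ∃ L'' : List (Tm .Bind), L'.Perm L'' ∧ List.Forall₂ LC L L'') := by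
  constructor
  · intro h
    have hinv : InvP .Env (mkEnv L r) (mkEnv L' r') := lc_inv h
    obtain ⟨hbinds, htail⟩ := hinv
    rw [tailOf_mkEnv, tailOf_mkEnv, hr.tailOf_eq, hr'.tailOf_eq] at htail
    rw [binds_mkEnv, binds_mkEnv, hr.binds_eq, hr'.binds_eq, add_zero, add_zero] at hbinds
    have hperm := Multiset.coe_eq_coe.mp hbinds
    exact ⟨htail, exists_perm_forall₂ hperm⟩
  · rintro ⟨rfl, L'', hperm, hfa⟩
    exact (lc_mkEnv_forall₂ hfa r).trans (lc_mkEnv_perm hperm r).symm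


/-- Two terms of sort `Env` of the forms
`env(b₁, env(…, env(b_m, r)…))` and `env(b₁', env(…, env(b_k', r')…))`, where `r` and `r'`
are each either a variable or `emptyEnv`, are LC-equal if and only if `r = r'`, `m = k`,
and there is a bijection `π` of `{1,…,m}` with `b_i =_LC b'_{π(i)}` for all `i`
(equivalently: the list `L'` permutes to a list that is componentwise LC-equal to `L`).
In particular, the LC-class of such a term is determined by its tail together with
the multiset of LC-classes of its Bind-components. -/
theorem lc_env_spine_characterization
    (L L' : List (Tm .Bind)) (r r' : Tm .Env) (hr : IsTail r) (hr' : IsTail r') :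
    LC (mkEnv L r) (mkEnv L' r') ↔
      (r = r' ∧ ∃ L'' : List (Tm .Bind), L'.Perm L'' ∧ List.Forall₂ LC L L'') := by
  exact lc_env_spine_characterization' L L' r r' hr hr' 

end LCTerms
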